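/- Let b ≥ 1, let V be a finite-dimensional real inner product space with orthogonal splitting V = V₁ ⊕ V₂, dim V₁ = b, and let A: Λ²V → Λ²V be self-adjoint such that V₁∧V₁, V₁∧V₂, V₂∧V₂ are eigenspaces with eigenvalues λ₁₁, λ₁₂, λ₂₂. Given ε > 0, set δ = ε/dim V. If λ₁₂ > 0, (b-1)λ₁₁ + λ₁₂ > 0, and |λ₂₂| < δ, then for every k ≥ b and every orthonormal set {u₀, u₁, ..., u_k} ⊂ V, ∑_{i=1}^k ⟨A(u₀∧uᵢ), u₀∧uᵢ⟩ > -ε. -/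

import Mathlib

/-!
Split each `u i = x i + y i` along `V = V₁ ⊕ V₂` and write `α = ‖x 0‖²`, `a i = ‖x (i+1)‖²`,
`p i = ⟪x 0, x (i+1)⟫`. Orthonormality turns the `i`-th term into
`l₁₁ (α aᵢ - pᵢ²) + l₁₂ (α (1 - aᵢ) + (1 - α) aᵢ + 2 pᵢ²) + l₂₂ ((1 - α)(1 - aᵢ) - pᵢ²)`,
the brackets being the squared norms of the components of `u 0 ∧ u (i+1)` in `V₁ ∧ V₁`,
`V₁ ∧ V₂` (the mixed block) and `V₂ ∧ V₂`.
The last bracket lies in `[0, 1]` and there are `k < dim V` terms, so the `l₂₂` part exceeds `-ε`.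
Bessel's inequality against an orthonormal basis of `V₁`, resp. of `V₁ ∩ (x 0)ᗮ` (of dimension
`b - 1`), gives `α + ∑ aᵢ ≤ b` and `∑ (α aᵢ - pᵢ²) ≤ (b - 1) α`; as the mixed sum is at least `α`
once `2 ≤ b ≤ k`, the condition `(b - 1) l₁₁ + l₁₂ > 0` makes the rest nonnegative.
-/

open scoped RealInnerProductSpace

open Module Finset

section Frames

variable {V : Type*} [NormedAddCommGroup V] [InnerProductSpace ℝ V]

theorem real_inner_sq_le_norm_sq_mul_norm_sq (v w : V) : ⟪v, w⟫ ^ 2 ≤ ‖v‖ ^ 2 * ‖w‖ ^ 2 := by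
  rw [← sq_abs, ← mul_pow]
  exact pow_le_pow_left₀ (abs_nonneg _) (abs_real_inner_le_norm v w) 2

theorem inner_add_add_of_orthogonal {V₁ V₂ : Submodule ℝ V}
    (horth : ∀ x ∈ V₁, ∀ y ∈ V₂, ⟪x, y⟫ = 0) {x x' y y' : V} (hx : x ∈ V₁) (hx' : x' ∈ V₁)
    (hy : y ∈ V₂) (hy' : y' ∈ V₂) : ⟪x + y, x' + y'⟫ = ⟪x, x'⟫ + ⟪y, y'⟫ := by
  rw [inner_add_left, inner_add_right, inner_add_right, horth x hx y' hy', real_inner_comm x' y,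
    horth x' hx' y hy]
  ring

theorem Orthonormal.sum_norm_sq_le_finrank {ι : Type*} [Fintype ι] {u : ι → V}
    (hu : Orthonormal ℝ u) (K : Submodule ℝ V) [FiniteDimensional ℝ K] {x : ι → V}
    (hx : ∀ i, x i ∈ K) (hxu : ∀ i, u i - x i ∈ Kᗮ) :
    ∑ i, ‖x i‖ ^ 2 ≤ finrank ℝ K := by
  let e := stdOrthonormalBasis ℝ K
  have hcoord : ∀ i j, ⟪(e j : V), x i⟫ = ⟪(e j : V), u i⟫ := fun i j => by
    have := Submodule.inner_right_of_mem_orthogonal (e j).2 (hxu i)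
    rw [inner_sub_right, sub_eq_zero] at this
    exact this.symm
  have hparseval : ∀ i, ‖x i‖ ^ 2 = ∑ j, ⟪(e j : V), u i⟫ ^ 2 := fun i => by
    rw [← Submodule.coe_norm (x := ⟨x i, hx i⟩), ← e.sum_sq_inner_right]
    simp only [Submodule.coe_inner, hcoord]
  have hbessel : ∀ j, ∑ i, ⟪(e j : V), u i⟫ ^ 2 ≤ 1 := fun j => by
    have := hu.sum_inner_products_le (e j : V) (s := univ)
    rw [← Submodule.coe_norm, e.orthonormal.1 j, one_pow] at this
    simpa [real_inner_comm, sq_abs] using this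
  calc ∑ i, ‖x i‖ ^ 2 = ∑ j, ∑ i, ⟪(e j : V), u i⟫ ^ 2 := by
        simp only [hparseval]; exact sum_comm
    _ ≤ ∑ _j : Fin (finrank ℝ K), (1 : ℝ) := sum_le_sum fun j _ => hbessel j
    _ = finrank ℝ K := by simp

theorem Orthonormal.sum_gram_det_le {ι : Type*} [Fintype ι] {u : ι → V}
    (hu : Orthonormal ℝ u) (K : Submodule ℝ V) [FiniteDimensional ℝ K] {x : ι → V}
    (hx : ∀ i, x i ∈ K) (hxu : ∀ i, u i - x i ∈ Kᗮ) {v : V} (hv : v ∈ K) :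
    ∑ i, (‖v‖ ^ 2 * ‖x i‖ ^ 2 - ⟪v, x i⟫ ^ 2) ≤ (finrank ℝ K - 1) * ‖v‖ ^ 2 := by
  rcases eq_or_ne v 0 with rfl | hv0
  · simp
  have hnv : ‖v‖ ^ 2 ≠ 0 := by positivity
  set L : Submodule ℝ V := (ℝ ∙ v)ᗮ ⊓ K
  have hLK : L ≤ K := inf_le_right
  have hfinrank : (finrank ℝ L : ℝ) = finrank ℝ K - 1 := by
    have := Submodule.finrank_add_inf_finrank_orthogonal
      ((Submodule.span_singleton_le_iff_mem v K).mpr hv)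
    rw [finrank_span_singleton hv0] at this
    rw [← this]; push_cast; ring
  have hvL : v ∈ Lᗮ := Submodule.orthogonal_le inf_le_left
    (Submodule.le_orthogonal_orthogonal _ (Submodule.mem_span_singleton_self v))
  set z : ι → V := fun i => x i - (⟪v, x i⟫ / ‖v‖ ^ 2) • v
  have hz : ∀ i, z i ∈ L := fun i => by
    refine ⟨?_, K.sub_mem (hx i) (K.smul_mem _ hv)⟩
    rw [SetLike.mem_coe, Submodule.mem_orthogonal_singleton_iff_inner_right, inner_sub_right,
      real_inner_smul_right, real_inner_self_eq_norm_sq]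
    field_simp
    ring
  have hzu : ∀ i, u i - z i ∈ Lᗮ := fun i => by
    rw [show u i - z i = (u i - x i) + (⟪v, x i⟫ / ‖v‖ ^ 2) • v by simp only [z]; abel]
    exact Lᗮ.add_mem (Submodule.orthogonal_le hLK (hxu i)) (Lᗮ.smul_mem _ hvL)
  have hnorm : ∀ i, ‖v‖ ^ 2 * ‖x i‖ ^ 2 - ⟪v, x i⟫ ^ 2 = ‖v‖ ^ 2 * ‖z i‖ ^ 2 := fun i => by
    simp only [z]
    rw [@norm_sub_sq_real, real_inner_smul_right, real_inner_comm, norm_smul, mul_pow,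
      Real.norm_eq_abs, sq_abs]
    field_simp
    ring
  calc ∑ i, (‖v‖ ^ 2 * ‖x i‖ ^ 2 - ⟪v, x i⟫ ^ 2) = ‖v‖ ^ 2 * ∑ i, ‖z i‖ ^ 2 := by
        simp only [hnorm, mul_sum]
    _ ≤ ‖v‖ ^ 2 * finrank ℝ L := by
        gcongr; exact hu.sum_norm_sq_le_finrank L hz hzu
    _ = (finrank ℝ K - 1) * ‖v‖ ^ 2 := by rw [hfinrank]; ring

end Frames

section Wedge

variable {V W : Type*} [NormedAddCommGroup V] [InnerProductSpace ℝ V]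
  [NormedAddCommGroup W] [InnerProductSpace ℝ W] {wedge : V →ₗ[ℝ] V →ₗ[ℝ] W}

theorem wedge_swap
    (hinner : ∀ x y z u : V, ⟪wedge x y, wedge z u⟫ = ⟪x, z⟫ * ⟪y, u⟫ - ⟪x, u⟫ * ⟪y, z⟫)
    (x y : V) : wedge y x = -wedge x y := by
  rw [eq_neg_iff_add_eq_zero, ← inner_self_eq_zero (𝕜 := ℝ)]
  simp only [inner_add_left, inner_add_right, hinner, real_inner_comm x y]
  ring

theorem inner_map_wedge_self_of_orthogonal_blocks
    (hinner : ∀ x y z u : V, ⟪wedge x y, wedge z u⟫ = ⟪x, z⟫ * ⟪y, u⟫ - ⟪x, u⟫ * ⟪y, z⟫)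
    {V₁ V₂ : Submodule ℝ V} (horth : ∀ x ∈ V₁, ∀ y ∈ V₂, ⟪x, y⟫ = 0)
    {A : W →ₗ[ℝ] W} {l₁₁ l₁₂ l₂₂ : ℝ}
    (he₁₁ : ∀ x ∈ V₁, ∀ y ∈ V₁, A (wedge x y) = l₁₁ • wedge x y)
    (he₁₂ : ∀ x ∈ V₁, ∀ y ∈ V₂, A (wedge x y) = l₁₂ • wedge x y)
    (he₂₂ : ∀ x ∈ V₂, ∀ y ∈ V₂, A (wedge x y) = l₂₂ • wedge x y)
    {x x' y y' : V} (hx : x ∈ V₁) (hx' : x' ∈ V₁) (hy : y ∈ V₂) (hy' : y' ∈ V₂) :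
    ⟪A (wedge (x + y) (x' + y')), wedge (x + y) (x' + y')⟫ =
      l₁₁ * (‖x‖ ^ 2 * ‖x'‖ ^ 2 - ⟪x, x'⟫ ^ 2)
        + l₁₂ * (‖x‖ ^ 2 * ‖y'‖ ^ 2 + ‖y‖ ^ 2 * ‖x'‖ ^ 2 - 2 * ⟪x, x'⟫ * ⟪y, y'⟫)
        + l₂₂ * (‖y‖ ^ 2 * ‖y'‖ ^ 2 - ⟪y, y'⟫ ^ 2) := by
  have hyx : A (wedge y x') = l₁₂ • wedge y x' := by
    rw [wedge_swap hinner x' y, map_neg, he₁₂ x' hx' y hy, smul_neg]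
  have hperp : ∀ ⦃v⦄, v ∈ V₁ → ∀ ⦃w⦄, w ∈ V₂ → ⟪w, v⟫ = 0 := fun v hv w hw => by
    rw [real_inner_comm]; exact horth v hv w hw
  simp only [map_add, LinearMap.add_apply, he₁₁ x hx x' hx', he₁₂ x hx y' hy', hyx,
    he₂₂ y hy y' hy', inner_add_left, inner_add_right, real_inner_smul_left, hinner,
    horth x hx y hy, horth x hx y' hy', horth x' hx' y hy, horth x' hx' y' hy',
    hperp hx hy, hperp hx hy', hperp hx' hy, hperp hx' hy', real_inner_comm x x',
    real_inner_comm y y', real_inner_self_eq_norm_sq]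
  ring

end Wedge

theorem le_sum_mixed_of_two_le {ι : Type*} [Fintype ι] {b : ℕ} (hb : 2 ≤ b)
    (hbι : b ≤ Fintype.card ι) {α : ℝ} {a : ι → ℝ} (hα0 : 0 ≤ α) (hα1 : α ≤ 1) (ha0 : ∀ i, 0 ≤ a i)
    (htrace : α + ∑ i, a i ≤ b) :
    α ≤ ∑ i, (α * (1 - a i) + (1 - α) * a i) := by
  have hsum : ∑ i, (α * (1 - a i) + (1 - α) * a i)
      = Fintype.card ι * α + (1 - 2 * α) * ∑ i, a i := by
    simp only [show ∀ i, α * (1 - a i) + (1 - α) * a i = α + (1 - 2 * α) * a i by intro; ring,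
      sum_add_distrib, ← mul_sum, sum_const, card_univ, nsmul_eq_mul]
  have hs0 : 0 ≤ ∑ i, a i := sum_nonneg fun i _ => ha0 i
  have hbι' : (b : ℝ) ≤ Fintype.card ι := by exact_mod_cast hbι
  have hb' : (2 : ℝ) ≤ b := by exact_mod_cast hb
  rw [hsum]
  rcases le_or_gt α (1 / 2) with hα | hα
  · nlinarith [mul_nonneg (by linarith : (0 : ℝ) ≤ 1 - 2 * α) hs0]
  · nlinarith [mul_nonneg (by linarith : (0 : ℝ) ≤ 2 * α - 1)
      (by linarith : (0 : ℝ) ≤ b - α - ∑ i, a i),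
      mul_nonneg (by linarith : (0 : ℝ) ≤ b - 2 * α) (by linarith : (0 : ℝ) ≤ 1 - α)]

theorem sum_pure_add_mixed_nonneg {ι : Type*} [Fintype ι] {b : ℕ} (hbι : b ≤ Fintype.card ι)
    {α l₁₁ l₁₂ : ℝ} {a p : ι → ℝ} (hα0 : 0 ≤ α) (hα1 : α ≤ 1) (ha0 : ∀ i, 0 ≤ a i)
    (ha1 : ∀ i, a i ≤ 1) (hp : ∀ i, p i ^ 2 ≤ α * a i) (htrace : α + ∑ i, a i ≤ b)
    (hgram : ∑ i, (α * a i - p i ^ 2) ≤ (b - 1) * α)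
    (h12 : 0 < l₁₂) (hbl : 0 < (b - 1 : ℝ) * l₁₁ + l₁₂) :
    0 ≤ ∑ i, (l₁₁ * (α * a i - p i ^ 2)
      + l₁₂ * (α * (1 - a i) + (1 - α) * a i + 2 * p i ^ 2)) := by
  rw [sum_add_distrib, ← mul_sum, ← mul_sum]
  set S₁ := ∑ i, (α * a i - p i ^ 2)
  set S₂ := ∑ i, (α * (1 - a i) + (1 - α) * a i + 2 * p i ^ 2)
  have hS₁ : 0 ≤ S₁ := sum_nonneg fun i _ => sub_nonneg.mpr (hp i)
  have hS₂_ge : ∑ i, (α * (1 - a i) + (1 - α) * a i) ≤ S₂ :=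
    sum_le_sum fun i _ => by nlinarith [sq_nonneg (p i)]
  have hS₂ : 0 ≤ S₂ := (sum_nonneg fun i _ => by nlinarith [ha0 i, ha1 i]).trans hS₂_ge
  rcases le_or_gt 0 l₁₁ with hl | hl
  · positivity
  rcases le_or_gt 2 b with hb | hb
  · have hαS₂ := (le_sum_mixed_of_two_le hb hbι hα0 hα1 ha0 htrace).trans hS₂_ge
    nlinarith [mul_le_mul_of_nonpos_left hgram hl.le, mul_le_mul_of_nonneg_left hαS₂ h12.le]
  · have hb1 : (b : ℝ) - 1 ≤ 0 := sub_nonpos.mpr (by exact_mod_cast Nat.lt_succ_iff.mp hb)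
    have : S₁ = 0 := le_antisymm (hgram.trans (mul_nonpos_of_nonpos_of_nonneg hb1 hα0)) hS₁
    rw [this, mul_zero, zero_add]
    positivity

theorem neg_lt_mul_sum_of_abs_lt_div {ι : Type*} [Fintype ι] {t : ι → ℝ} (ht0 : ∀ i, 0 ≤ t i)
    (ht1 : ∀ i, t i ≤ 1) {l ε n : ℝ} (hn : (Fintype.card ι : ℝ) < n) (hl : |l| < ε / n) :
    -ε < l * ∑ i, t i := by
  have hn0 : 0 < n := (Nat.cast_nonneg _).trans_lt hn
  have hS0 : 0 ≤ ∑ i, t i := sum_nonneg fun i _ => ht0 i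
  have hSn : ∑ i, t i ≤ n := by
    calc ∑ i, t i ≤ ∑ _i : ι, (1 : ℝ) := sum_le_sum fun i _ => ht1 i
      _ = Fintype.card ι := by simp
      _ ≤ n := hn.le
  have hlε : |l| * n < ε := (lt_div_iff₀ hn0).mp hl
  calc -ε < -(|l| * n) := neg_lt_neg hlε
    _ ≤ -(|l| * ∑ i, t i) := neg_le_neg (mul_le_mul_of_nonneg_left hSn (abs_nonneg l))
    _ ≤ l * ∑ i, t i := by
      rw [← abs_of_nonneg hS0, ← abs_mul, abs_of_nonneg hS0]; exact neg_abs_le _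

theorem neg_lt_sum_block_terms {ι : Type*} [Fintype ι] {b : ℕ} (hbι : b ≤ Fintype.card ι)
    {α l₁₁ l₁₂ l₂₂ ε n : ℝ} {a p : ι → ℝ} (hα0 : 0 ≤ α) (hα1 : α ≤ 1) (ha0 : ∀ i, 0 ≤ a i)
    (ha1 : ∀ i, a i ≤ 1) (hp : ∀ i, p i ^ 2 ≤ α * a i)
    (hp' : ∀ i, p i ^ 2 ≤ (1 - α) * (1 - a i)) (htrace : α + ∑ i, a i ≤ b)
    (hgram : ∑ i, (α * a i - p i ^ 2) ≤ (b - 1) * α) (hn : (Fintype.card ι : ℝ) < n)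
    (h12 : 0 < l₁₂) (hbl : 0 < (b - 1 : ℝ) * l₁₁ + l₁₂) (h22 : |l₂₂| < ε / n) :
    -ε < ∑ i, (l₁₁ * (α * a i - p i ^ 2)
      + l₁₂ * (α * (1 - a i) + (1 - α) * a i + 2 * p i ^ 2)
      + l₂₂ * ((1 - α) * (1 - a i) - p i ^ 2)) := by
  have hpure_mixed := sum_pure_add_mixed_nonneg hbι hα0 hα1 ha0 ha1 hp htrace hgram h12 hbl
  have hrest := neg_lt_mul_sum_of_abs_lt_div (t := fun i => (1 - α) * (1 - a i) - p i ^ 2)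
    (fun i => sub_nonneg.mpr (hp' i))
    (fun i => by nlinarith [ha0 i, ha1 i, sq_nonneg (p i)]) hn h22
  rw [sum_add_distrib, ← mul_sum]
  linarith

theorem stmt_18_general
    {V W : Type*} [NormedAddCommGroup V] [InnerProductSpace ℝ V] [FiniteDimensional ℝ V]
    [NormedAddCommGroup W] [InnerProductSpace ℝ W]
    (wedge : V →ₗ[ℝ] V →ₗ[ℝ] W)
    (hinner : ∀ x y z u : V,
      ⟪wedge x y, wedge z u⟫ = ⟪x, z⟫ * ⟪y, u⟫ - ⟪x, u⟫ * ⟪y, z⟫)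
    (V₁ V₂ : Submodule ℝ V) (b : ℕ) (hdim : Module.finrank ℝ V₁ = b)
    (horth : ∀ x ∈ V₁, ∀ y ∈ V₂, ⟪x, y⟫ = 0)
    (hsum : V₁ ⊔ V₂ = ⊤)
    (A : W →ₗ[ℝ] W)
    (l₁₁ l₁₂ l₂₂ ε : ℝ)
    (he₁₁ : ∀ x ∈ V₁, ∀ y ∈ V₁, A (wedge x y) = l₁₁ • wedge x y)
    (he₁₂ : ∀ x ∈ V₁, ∀ y ∈ V₂, A (wedge x y) = l₁₂ • wedge x y)
    (he₂₂ : ∀ x ∈ V₂, ∀ y ∈ V₂, A (wedge x y) = l₂₂ • wedge x y)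
    (h12 : 0 < l₁₂) (hbl : 0 < (b - 1 : ℝ) * l₁₁ + l₁₂)
    (h22 : |l₂₂| < ε / (Module.finrank ℝ V)) :
    ∀ k : ℕ, b ≤ k → ∀ u : Fin (k + 1) → V, Orthonormal ℝ u →
      -ε < ∑ i : Fin k, ⟪A (wedge (u 0) (u i.succ)), wedge (u 0) (u i.succ)⟫ := by
  intro k hk u hu
  choose x hx y hy hxy using fun i =>
    Submodule.mem_sup.mp (hsum ▸ Submodule.mem_top : u i ∈ V₁ ⊔ V₂)
  have hxu : ∀ i, u i - x i ∈ V₁ᗮ := fun i => by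
    rw [← hxy i, add_sub_cancel_left]
    exact (Submodule.mem_orthogonal V₁ _).mpr fun z hz => horth z hz _ (hy i)
  have hframe : ∀ i j, ⟪x i, x j⟫ + ⟪y i, y j⟫ = if i = j then 1 else 0 := fun i j => by
    rw [← inner_add_add_of_orthogonal horth (hx i) (hx j) (hy i) (hy j), hxy, hxy,
      orthonormal_iff_ite.mp hu]
  have hny : ∀ i, ‖y i‖ ^ 2 = 1 - ‖x i‖ ^ 2 := fun i => by
    have := hframe i i
    rw [if_pos rfl, real_inner_self_eq_norm_sq, real_inner_self_eq_norm_sq] at this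
    linarith
  have hyy : ∀ i : Fin k, ⟪y 0, y i.succ⟫ = -⟪x 0, x i.succ⟫ := fun i => by
    have := hframe 0 i.succ
    rw [if_neg (Fin.succ_ne_zero i).symm] at this
    linarith
  have hnx1 : ∀ i, ‖x i‖ ^ 2 ≤ 1 := fun i => by linarith [hny i, sq_nonneg ‖y i‖]
  have hterm : ∀ i : Fin k, ⟪A (wedge (u 0) (u i.succ)), wedge (u 0) (u i.succ)⟫ =
      l₁₁ * (‖x 0‖ ^ 2 * ‖x i.succ‖ ^ 2 - ⟪x 0, x i.succ⟫ ^ 2)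
        + l₁₂ * (‖x 0‖ ^ 2 * (1 - ‖x i.succ‖ ^ 2) + (1 - ‖x 0‖ ^ 2) * ‖x i.succ‖ ^ 2
          + 2 * ⟪x 0, x i.succ⟫ ^ 2)
        + l₂₂ * ((1 - ‖x 0‖ ^ 2) * (1 - ‖x i.succ‖ ^ 2) - ⟪x 0, x i.succ⟫ ^ 2) := fun i => by
    rw [← hxy 0, ← hxy i.succ, inner_map_wedge_self_of_orthogonal_blocks hinner horth he₁₁ he₁₂
      he₂₂ (hx 0) (hx i.succ) (hy 0) (hy i.succ), hny, hny, hyy]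
    ring
  simp only [hterm]
  refine neg_lt_sum_block_terms (by simpa using hk) (sq_nonneg _) (hnx1 0) (fun _ => sq_nonneg _)
    (fun i => hnx1 i.succ) (fun _ => real_inner_sq_le_norm_sq_mul_norm_sq _ _) (fun i => ?_)
    ?_ ?_ ?_ h12 hbl h22
  · simpa [hny, hyy] using real_inner_sq_le_norm_sq_mul_norm_sq (y 0) (y i.succ)
  · rw [← Fin.sum_univ_succ (f := fun i => ‖x i‖ ^ 2), ← hdim]
    exact hu.sum_norm_sq_le_finrank V₁ hx hxu
  · rw [← hdim]
    exact (hu.comp _ (Fin.succ_injective k)).sum_gram_det_le V₁ (fun i => hx i.succ)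
      (fun i => hxu i.succ) (hx 0)
  · have := hu.linearIndependent.fintype_card_le_finrank
    simp only [Fintype.card_fin] at this ⊢
    exact_mod_cast this

/-- Lemma 6.2 (reiser_wraith_contextual): with V = V₁ ⊕ V₂, dim V₁ = b, eigenvalues
λ₁₁, λ₁₂, λ₂₂ of A on V₁∧V₁, V₁∧V₂, V₂∧V₂ satisfying λ₁₂ > 0, (b-1)λ₁₁ + λ₁₂ > 0,
and |λ₂₂| < δ = ε/dim V, every partial trace over an orthonormal (k+1)-frame with
k ≥ b exceeds -ε. -/
theorem stmt_18
    {V W : Type*} [NormedAddCommGroup V] [InnerProductSpace ℝ V] [FiniteDimensional ℝ V]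
    [NormedAddCommGroup W] [InnerProductSpace ℝ W]
    (wedge : V →ₗ[ℝ] V →ₗ[ℝ] W)
    (hspan : Submodule.span ℝ {w : W | ∃ x y, wedge x y = w} = ⊤)
    (hinner : ∀ x y z u : V,
      ⟪wedge x y, wedge z u⟫ = ⟪x, z⟫ * ⟪y, u⟫ - ⟪x, u⟫ * ⟪y, z⟫)
    (V₁ V₂ : Submodule ℝ V) (b : ℕ) (hb : 1 ≤ b) (hdim : Module.finrank ℝ V₁ = b)
    (horth : ∀ x ∈ V₁, ∀ y ∈ V₂, ⟪x, y⟫ = 0)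
    (hsum : V₁ ⊔ V₂ = ⊤)
    (A : W →ₗ[ℝ] W) (hA : ∀ x y : W, ⟪A x, y⟫ = ⟪x, A y⟫)
    (l₁₁ l₁₂ l₂₂ ε : ℝ) (hε : 0 < ε)
    (he₁₁ : ∀ x ∈ V₁, ∀ y ∈ V₁, A (wedge x y) = l₁₁ • wedge x y)
    (he₁₂ : ∀ x ∈ V₁, ∀ y ∈ V₂, A (wedge x y) = l₁₂ • wedge x y)
    (he₂₂ : ∀ x ∈ V₂, ∀ y ∈ V₂, A (wedge x y) = l₂₂ • wedge x y)
    (h12 : 0 < l₁₂) (hbl : 0 < (b - 1 : ℝ) * l₁₁ + l₁₂)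
    (h22 : |l₂₂| < ε / (Module.finrank ℝ V)) :
    ∀ k : ℕ, b ≤ k → ∀ u : Fin (k + 1) → V, Orthonormal ℝ u →
      -ε < ∑ i : Fin k, ⟪A (wedge (u 0) (u i.succ)), wedge (u 0) (u i.succ)⟫ :=
  stmt_18_general wedge hinner V₁ V₂ b hdim horth hsum A l₁₁ l₁₂ l₂₂ ε he₁₁ he₁₂ he₂₂ h12 hbl h22
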